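/- A bijection σ : 𝒢 → 𝒢 is an automorphism of the Grassmann graph (𝒢, ∼), i.e. σ and σ⁻¹ preserve adjacency, if and only if σ is a collineation of the Grassmann space (𝒢, 𝔓), i.e. σ and σ⁻¹ map every pencil onto a pencil. -/

import Mathlib

/-- The Grassmannian `𝒢` of all subspaces `X ≤ V` with `X ≅ V/X`. -/
def Grass (K V : Type*) [DivisionRing K] [AddCommGroup V] [Module K V] :
    Set (Submodule K V) :=
  {X | Nonempty (X ≃ₗ[K] (V ⧸ X))}

variable {K V : Type*} [DivisionRing K] [AddCommGroup V] [Module K V]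

/-- The dimension of the quotient `E / M` (computed as the rank of `E ⧸ (M ∩ E)`). -/
noncomputable def quotRank (M E : Submodule K V) : Cardinal :=
  Module.rank K (E ⧸ (M.comap E.subtype))

/-- Two subspaces are adjacent if `dim (X/(X ⊓ Y)) = dim (Y/(X ⊓ Y)) = 1`. -/
def Adjacent (X Y : Submodule K V) : Prop :=
  quotRank (X ⊓ Y) X = 1 ∧ quotRank (X ⊓ Y) Y = 1

/-- Two subspaces are distant if they are complementary: `X ⊕ Y = V`. -/
def Distant (X Y : Submodule K V) : Prop := IsCompl X Y

/-- The star `𝒢[M⟩` with centre `M`. -/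
def starSet (M : Submodule K V) : Set (Submodule K V) :=
  {E | M ≤ E ∧ quotRank M E = 1}

/-- `M` is the centre of a star, i.e. there is `X ∈ 𝒢` with `M ≤ X`, `dim (X/M) = 1`. -/
def IsStarCentre (M : Submodule K V) : Prop :=
  ∃ X ∈ Grass K V, M ≤ X ∧ quotRank M X = 1

/-- The top `𝒢⟨N]` with carrier `N`. -/
def topSet (N : Submodule K V) : Set (Submodule K V) :=
  {E | E ≤ N ∧ quotRank E N = 1}

/-- `N` is the carrier of a top, i.e. there is `X ∈ 𝒢` with `X ≤ N`, `dim (N/X) = 1`. -/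
def IsTopCarrier (N : Submodule K V) : Prop :=
  ∃ X ∈ Grass K V, X ≤ N ∧ quotRank X N = 1

/-- An adjacency clique: a set of mutually adjacent elements of `𝒢`. -/
def IsAdjClique (A : Set (Submodule K V)) : Prop :=
  A ⊆ Grass K V ∧ A.Pairwise Adjacent

/-- A maximal adjacency clique. -/
def IsMaxAdjClique (A : Set (Submodule K V)) : Prop :=
  IsAdjClique A ∧ ∀ B, IsAdjClique B → A ⊆ B → A = B

/-- The pencil `𝒢[M,N] = {X ∈ 𝒢 | M < X < N}`. -/
def pencilSet (M N : Submodule K V) : Set (Submodule K V) :=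
  {X ∈ Grass K V | M < X ∧ X < N}

/-- `(M, N)` defines a pencil: there is `X ∈ 𝒢` with `M ≤ X ≤ N` and
`dim (X/M) = dim (N/X) = 1`. -/
def IsPencilPair (M N : Submodule K V) : Prop :=
  ∃ X ∈ Grass K V, M ≤ X ∧ X ≤ N ∧ quotRank M X = 1 ∧ quotRank X N = 1

/-- A pencil in `𝒢`. -/
def IsPencil (S : Set (Submodule K V)) : Prop :=
  ∃ M N : Submodule K V, IsPencilPair M N ∧ S = pencilSet M N

/-- A point is a one-dimensional subspace. -/
def IsPoint (p : Submodule K V) : Prop := Module.rank K p = 1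

/-- A line is a two-dimensional subspace. -/
def IsLine (L : Submodule K V) : Prop := Module.rank K L = 2

/-- Two subspaces meet if they have a common point, i.e. nonzero intersection. -/
def Meets (X Y : Submodule K V) : Prop := X ⊓ Y ≠ ⊥

/-- A distant clique: a set of mutually distant elements of `𝒢`. -/
def IsDistantClique (R : Set (Submodule K V)) : Prop :=
  R ⊆ Grass K V ∧ R.Pairwise Distant

/-- A set has at least three elements. -/
def HasThree (R : Set (Submodule K V)) : Prop :=
  ∃ A ∈ R, ∃ B ∈ R, ∃ C ∈ R, A ≠ B ∧ A ≠ C ∧ B ≠ C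

/-- Condition (R2): if a line meets three mutually distinct elements of `R`
then it meets all elements of `R`. -/
def MeetsThreeMeetsAll (R : Set (Submodule K V)) : Prop :=
  ∀ L : Submodule K V, IsLine L →
    ∀ E₀ ∈ R, ∀ E₁ ∈ R, ∀ E₂ ∈ R, E₀ ≠ E₁ → E₀ ≠ E₂ → E₁ ≠ E₂ →
      Meets L E₀ → Meets L E₁ → Meets L E₂ → ∀ E ∈ R, Meets L E

/-- A partial `Z`-regulus: conditions (R1) and (R2). -/
def IsPartialZRegulus (R : Set (Submodule K V)) : Prop :=
  (IsDistantClique R ∧ HasThree R) ∧ MeetsThreeMeetsAll R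

/-- A `Z`-regulus: a partial `Z`-regulus that is maximal, i.e. not properly
contained in any partial `Z`-regulus. -/
def IsZRegulus (R : Set (Submodule K V)) : Prop :=
  IsPartialZRegulus R ∧ ∀ S : Set (Submodule K V), IsPartialZRegulus S → R ⊆ S → R = S

/-- A directrix of `R`: a line meeting all elements of `R`. -/
def IsDirectrix (R : Set (Submodule K V)) (L : Submodule K V) : Prop :=
  IsLine L ∧ ∀ E ∈ R, Meets L E

/-- Condition (⊠2) from Theorem `Zreg`. -/
def BoxTwo (R : Set (Submodule K V)) : Prop :=
  ∀ E₀ ∈ R, ∀ E₁ ∈ R, ∀ E₂ ∈ R, E₀ ≠ E₁ → E₀ ≠ E₂ → E₁ ≠ E₂ →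
    ∀ W ∈ Grass K V, Adjacent W E₀ → ¬ Distant W E₁ → ¬ Distant W E₂ →
      ∀ E ∈ R, ¬ Distant W E

/-!
Adjacency and pencils determine each other. Two elements of `𝒢` are adjacent iff they are
distinct and lie on a common pencil. Conversely, for adjacent `X, Y` the pencil through them is
`{X, Y}^⊥⊥` for the relation "equal or adjacent", so it is determined by adjacency alone. A
common neighbour of `X` and `Y` lies in the star of `X ⊓ Y` or in the top of `X ⊔ Y`, hence is
equal or adjacent to every element of the pencil. An element of `{X, Y}^⊥⊥` is then either
a cover of `X ⊓ Y` or covered by `X ⊔ Y`. In the first case it lies below `X ⊔ Y`, for otherwise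
it is not adjacent to a hyperplane of `X ⊔ Y` that misses a point of `X ⊓ Y`. The second case
is dual. These separating neighbours exist because `dim V > 2` forces `X ⊓ Y ≠ 0` and
`X ⊔ Y ≠ V`.
-/

section ModularLattice

variable {α : Type*} [Lattice α] [IsModularLattice α] {a b c d : α}

theorem covBy_and_covBy_of_lt_of_lt (hab : a ⋖ b) (hbc : b ⋖ c) (had : a < d) (hdc : d < c) :
    a ⋖ d ∧ d ⋖ c := by
  rcases eq_or_ne d b with rfl | hdb
  · exact ⟨hab, hbc⟩
  have hinf : b ⊓ d = a := by
    refine (hab.eq_or_eq (le_inf hab.le had.le) inf_le_left).resolve_right fun h => ?_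
    rcases hbc.eq_or_eq (inf_eq_left.1 h) hdc.le with h' | h'
    exacts [hdb h', hdc.ne h']
  have hsup : b ⊔ d = c := by
    refine (hbc.eq_or_eq le_sup_left (sup_le hbc.le hdc.le)).resolve_left fun h => ?_
    rcases hab.eq_or_eq had.le (sup_eq_left.1 h) with h' | h'
    exacts [had.ne' h', hdb h']
  constructor
  · rw [← hinf]
    exact inf_covBy_of_covBy_sup_left (hsup ▸ hbc)
  · rw [← hsup]
    exact covBy_sup_of_inf_covBy_left (hinf ▸ hab)

theorem inf_covBy_or_covBy_sup {x y w : α} (hxy : x ⊓ y ⋖ x) (hyx : x ⊓ y ⋖ y)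
    (hwx : w ⊓ x ⋖ w) (hxw : w ⊓ x ⋖ x) (hwy : w ⊓ y ⋖ w) : x ⊓ y ⋖ w ∨ w ⋖ x ⊔ y := by
  by_cases h : w ⊓ x = w ⊓ y
  · left
    rcases hxw.eq_or_eq (le_inf inf_le_right (h.symm ▸ inf_le_right)) inf_le_left with h' | h'
    · rwa [h']
    · exact absurd h' hxy.ne
  · right
    have hwle : w ≤ x ⊔ y := by
      rw [← hwx.wcovBy.sup_eq hwy.wcovBy h]
      exact sup_le_sup inf_le_right inf_le_right
    have hxw' : x ⋖ w ⊔ x := covBy_sup_of_inf_covBy_left hwx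
    have hsup : w ⊔ x = x ⊔ y :=
      ((covBy_sup_of_inf_covBy_right hyx).eq_or_eq hxw'.le
        (sup_le hwle le_sup_left)).resolve_left hxw'.ne'
    exact hsup ▸ covBy_sup_of_inf_covBy_right hxw

variable [BoundedOrder α] [ComplementedLattice α]

theorem exists_covBy_not_le_of_ne_bot [IsAtomic α] (ha : a ≠ ⊥) (hab : a ≤ b) :
    ∃ c, c ⋖ b ∧ ¬ a ≤ c := by
  obtain ⟨p, hp, hpa⟩ := (eq_bot_or_exists_atom_le a).resolve_left ha
  obtain ⟨c, hpc, rfl⟩ := IsModularLattice.exists_disjoint_and_sup_eq (hpa.trans hab)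
  refine ⟨c, covBy_sup_of_inf_covBy_left (hpc.eq_bot ▸ hp.bot_covBy), fun hac => hp.1 ?_⟩
  exact hpc.eq_bot_of_le (hpa.trans hac)

theorem exists_covBy_not_le_of_ne_top [IsCoatomic α] (hb : b ≠ ⊤) (hab : a ≤ b) :
    ∃ c, a ⋖ c ∧ ¬ c ≤ b := by
  obtain ⟨c, hc, hbc⟩ :=
    exists_covBy_not_le_of_ne_bot (α := αᵒᵈ) (a := OrderDual.toDual b) (b := OrderDual.toDual a)
      hb hab
  exact ⟨OrderDual.ofDual c, toDual_covBy_toDual_iff.1 hc, hbc⟩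

end ModularLattice

theorem rank_map_mkQ {R W : Type*} [Ring R] [AddCommGroup W] [Module R W] (p q : Submodule R W) :
    Module.rank R (q.map p.mkQ) = Module.rank R (q ⧸ p.comap q.subtype) := by
  let g := p.mkQ ∘ₗ q.subtype
  have hker : LinearMap.ker g = p.comap q.subtype := by
    rw [LinearMap.ker_comp, Submodule.ker_mkQ]
  have hrange : LinearMap.range g = q.map p.mkQ := by
    rw [LinearMap.range_comp, Submodule.range_subtype]
  rw [← hker, ← hrange]
  exact g.quotKerEquivRange.rank_eq.symm

theorem quotRank_add {A B C : Submodule K V} (hAB : A ≤ B) (hBC : B ≤ C) :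
    quotRank A C = quotRank A B + quotRank B C := by
  set A' := A.comap C.subtype
  set B' := B.comap C.subtype
  have hB' : Module.rank K (B'.map A'.mkQ) = quotRank A B := by
    rw [rank_map_mkQ]
    refine (Submodule.Quotient.equiv _ _ (Submodule.comapSubtypeEquivOfLe hBC) ?_).rank_eq
    ext x
    rw [Submodule.map_equiv_eq_comap_symm]
    rfl
  have hC := (Submodule.quotientQuotientEquivQuotient A' B' (Submodule.comap_mono hAB)).rank_eq
  rw [quotRank, ← Submodule.rank_quotient_add_rank (B'.map A'.mkQ), hC, hB', add_comm]
  rfl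

theorem quotRank_bot (X : Submodule K V) : quotRank ⊥ X = Module.rank K X :=
  (Submodule.quotEquivOfEqBot _ (by simp)).rank_eq

theorem quotRank_top (X : Submodule K V) : quotRank X ⊤ = Module.rank K (V ⧸ X) :=
  (Submodule.Quotient.equiv _ _ Submodule.topEquiv (by ext; simp)).rank_eq

theorem quotRank_eq_one_iff_covBy {A B : Submodule K V} (h : A ≤ B) :
    quotRank A B = 1 ↔ A ⋖ B := by
  rw [covBy_iff_quot_is_simple h, isSimpleModule_iff_finrank_eq_one, quotRank,
    Module.rank_eq_one_iff_finrank_eq_one]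

theorem mem_grass_iff {X : Submodule K V} : X ∈ Grass K V ↔ quotRank ⊥ X = quotRank X ⊤ := by
  rw [quotRank_bot, quotRank_top]
  exact Module.nonempty_linearEquiv_iff_rank_eq

theorem rank_eq_two_of_mem_grass {X : Submodule K V} (hX : X ∈ Grass K V) (h : ⊥ ⋖ X ∨ X ⋖ ⊤) :
    Module.rank K V = 2 := by
  rw [mem_grass_iff] at hX
  rw [← rank_top, ← quotRank_bot, quotRank_add bot_le le_top, ← hX]
  rcases h with h | h
  · rw [(quotRank_eq_one_iff_covBy bot_le).2 h, one_add_one_eq_two]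
  · rw [hX, (quotRank_eq_one_iff_covBy le_top).2 h, one_add_one_eq_two]

section Adjacent

variable {X Y : Submodule K V}

theorem adjacent_iff_covBy : Adjacent X Y ↔ X ⊓ Y ⋖ X ∧ X ⊓ Y ⋖ Y := by
  rw [Adjacent, quotRank_eq_one_iff_covBy inf_le_left, quotRank_eq_one_iff_covBy inf_le_right]

theorem Adjacent.inf_covBy_left (h : Adjacent X Y) : X ⊓ Y ⋖ X := (adjacent_iff_covBy.1 h).1

theorem Adjacent.inf_covBy_right (h : Adjacent X Y) : X ⊓ Y ⋖ Y := (adjacent_iff_covBy.1 h).2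

theorem Adjacent.covBy_sup_left (h : Adjacent X Y) : X ⋖ X ⊔ Y :=
  covBy_sup_of_inf_covBy_right h.inf_covBy_right

theorem Adjacent.covBy_sup_right (h : Adjacent X Y) : Y ⋖ X ⊔ Y :=
  covBy_sup_of_inf_covBy_left h.inf_covBy_left

theorem Adjacent.symm (h : Adjacent X Y) : Adjacent Y X := by
  rw [adjacent_iff_covBy, inf_comm]
  exact (adjacent_iff_covBy.1 h).symm

theorem Adjacent.ne (h : Adjacent X Y) : X ≠ Y := by
  rintro rfl
  exact h.inf_covBy_left.ne (inf_idem X)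

theorem Adjacent.mem_grass (h : Adjacent X Y) (hX : X ∈ Grass K V) : Y ∈ Grass K V := by
  rw [mem_grass_iff] at hX ⊢
  have hbot := quotRank_add bot_le (inf_le_left : X ⊓ Y ≤ X)
  have hbot' := quotRank_add bot_le (inf_le_right : X ⊓ Y ≤ Y)
  have htop := quotRank_add (inf_le_left : X ⊓ Y ≤ X) le_top
  have htop' := quotRank_add (inf_le_right : X ⊓ Y ≤ Y) le_top
  rw [h.1, add_comm] at htop
  rw [h.2, add_comm] at htop'
  rw [h.1] at hbot
  rw [h.2] at hbot'
  rw [hbot', ← hbot, hX, Cardinal.add_one_inj.1 (htop.symm.trans htop')]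

theorem Adjacent.inf_ne_bot (hV : 2 < Module.rank K V) (hX : X ∈ Grass K V) (h : Adjacent X Y) :
    X ⊓ Y ≠ ⊥ := fun h0 =>
  hV.ne' (rank_eq_two_of_mem_grass hX (.inl (h0 ▸ h.inf_covBy_left)))

theorem Adjacent.sup_ne_top (hV : 2 < Module.rank K V) (hX : X ∈ Grass K V) (h : Adjacent X Y) :
    X ⊔ Y ≠ ⊤ := fun h0 =>
  hV.ne' (rank_eq_two_of_mem_grass hX (.inr (h0 ▸ h.covBy_sup_left)))

theorem adjacent_of_star {M X Y : Submodule K V} (hX : M ⋖ X) (hY : M ⋖ Y) (hne : X ≠ Y) :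
    Adjacent X Y := by
  rw [adjacent_iff_covBy, hX.wcovBy.inf_eq hY.wcovBy hne]
  exact ⟨hX, hY⟩

theorem adjacent_of_top {N X Y : Submodule K V} (hX : X ⋖ N) (hY : Y ⋖ N) (hne : X ≠ Y) :
    Adjacent X Y := by
  have hsup := hX.wcovBy.sup_eq hY.wcovBy hne
  rw [adjacent_iff_covBy]
  exact ⟨inf_covBy_of_covBy_sup_right (hsup ▸ hY), inf_covBy_of_covBy_sup_left (hsup ▸ hX)⟩

theorem inf_covBy_or_covBy_sup_of_adjacent {W : Submodule K V} (hXY : Adjacent X Y)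
    (hWX : Adjacent W X) (hWY : Adjacent W Y) : X ⊓ Y ⋖ W ∨ W ⋖ X ⊔ Y :=
  inf_covBy_or_covBy_sup hXY.inf_covBy_left hXY.inf_covBy_right hWX.inf_covBy_left
    hWX.inf_covBy_right hWY.inf_covBy_left

end Adjacent

theorem isPencilPair_iff {M N : Submodule K V} :
    IsPencilPair M N ↔ ∃ X ∈ Grass K V, M ⋖ X ∧ X ⋖ N := by
  refine exists_congr fun X => and_congr_right fun _ =>
    ⟨fun ⟨hMX, hXN, h1, h2⟩ => ?_, fun ⟨h1, h2⟩ => ?_⟩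
  · exact ⟨(quotRank_eq_one_iff_covBy hMX).1 h1, (quotRank_eq_one_iff_covBy hXN).1 h2⟩
  · exact ⟨h1.le, h2.le, (quotRank_eq_one_iff_covBy h1.le).2 h1,
      (quotRank_eq_one_iff_covBy h2.le).2 h2⟩

theorem IsPencil.subset_grass {S : Set (Submodule K V)} (hS : IsPencil S) : S ⊆ Grass K V := by
  obtain ⟨M, N, -, rfl⟩ := hS
  exact fun _ hZ => hZ.1

section Pencil

variable {X Y Z : Submodule K V}

theorem Adjacent.mem_pencilSet_left (hXY : Adjacent X Y) (hX : X ∈ Grass K V) :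
    X ∈ pencilSet (X ⊓ Y) (X ⊔ Y) :=
  ⟨hX, hXY.inf_covBy_left.lt, hXY.covBy_sup_left.lt⟩

theorem Adjacent.mem_pencilSet_right (hXY : Adjacent X Y) (hY : Y ∈ Grass K V) :
    Y ∈ pencilSet (X ⊓ Y) (X ⊔ Y) :=
  ⟨hY, hXY.inf_covBy_right.lt, hXY.covBy_sup_right.lt⟩

theorem Adjacent.covBy_of_mem_pencilSet (hXY : Adjacent X Y) (hZ : Z ∈ pencilSet (X ⊓ Y) (X ⊔ Y)) :
    X ⊓ Y ⋖ Z ∧ Z ⋖ X ⊔ Y :=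
  covBy_and_covBy_of_lt_of_lt hXY.inf_covBy_left hXY.covBy_sup_left hZ.2.1 hZ.2.2

theorem isPencil_iff {S : Set (Submodule K V)} :
    IsPencil S ↔
      ∃ X ∈ Grass K V, ∃ Y ∈ Grass K V, Adjacent X Y ∧ S = pencilSet (X ⊓ Y) (X ⊔ Y) := by
  constructor
  · rintro ⟨M, N, hMN, rfl⟩
    obtain ⟨X, hX, hMX, hXN⟩ := isPencilPair_iff.1 hMN
    obtain ⟨w, hwN, hwX⟩ := SetLike.exists_of_lt hXN.lt
    have hwY : w ∈ (K ∙ w) ⊔ M := Submodule.mem_sup_left (Submodule.mem_span_singleton_self w)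
    have hMY : M ⋖ (K ∙ w) ⊔ M := Submodule.covBy_span_singleton_sup fun hw => hwX (hMX.le hw)
    have hXY : X ≠ (K ∙ w) ⊔ M := fun h => hwX (h ▸ hwY)
    have hsup : X ⊔ ((K ∙ w) ⊔ M) = N := by
      refine (hXN.eq_or_eq le_sup_left (sup_le hXN.le (sup_le ?_ (hMX.le.trans hXN.le))))
        |>.resolve_left fun h => hwX (h ▸ Submodule.mem_sup_right hwY)
      exact (Submodule.span_singleton_le_iff_mem w N).2 hwN
    have hadj := adjacent_of_star hMX hMY hXY
    refine ⟨X, hX, _, hadj.mem_grass hX, hadj, ?_⟩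
    rw [hMX.wcovBy.inf_eq hMY.wcovBy hXY, hsup]
  · rintro ⟨X, hX, Y, -, hXY, rfl⟩
    exact ⟨_, _, isPencilPair_iff.2 ⟨X, hX, hXY.inf_covBy_left, hXY.covBy_sup_left⟩, rfl⟩

theorem adjacent_iff_exists_pencil (hX : X ∈ Grass K V) (hY : Y ∈ Grass K V) :
    Adjacent X Y ↔ X ≠ Y ∧ ∃ S, IsPencil S ∧ X ∈ S ∧ Y ∈ S := by
  constructor
  · intro hXY
    exact ⟨hXY.ne, _, isPencil_iff.2 ⟨X, hX, Y, hY, hXY, rfl⟩, hXY.mem_pencilSet_left hX,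
      hXY.mem_pencilSet_right hY⟩
  · rintro ⟨hne, S, hS, hXS, hYS⟩
    obtain ⟨A, -, B, -, hAB, rfl⟩ := isPencil_iff.1 hS
    exact adjacent_of_star (hAB.covBy_of_mem_pencilSet hXS).1 (hAB.covBy_of_mem_pencilSet hYS).1 hne

end Pencil

section BijOn

open Set

variable {α : Type*} {r : α → α → Prop} {s : Set α} {f : α → α}

/-- `{x, y}^⊥⊥` inside `s`, where `⊥` is taken with respect to `r`. -/
def perpPerp (r : α → α → Prop) (s : Set α) (x y : α) : Set α :=
  {z ∈ s | ∀ w ∈ s, r w x → r w y → r w z}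

theorem image_perpPerp (hf : BijOn f s s) (hr : ∀ a ∈ s, ∀ b ∈ s, r a b ↔ r (f a) (f b))
    {x y : α} (hx : x ∈ s) (hy : y ∈ s) : f '' perpPerp r s x y = perpPerp r s (f x) (f y) := by
  ext z'
  constructor
  · rintro ⟨z, ⟨hz, hzw⟩, rfl⟩
    refine ⟨hf.mapsTo hz, fun w' hw' hwx hwy => ?_⟩
    obtain ⟨w, hw, rfl⟩ := hf.surjOn hw'
    rw [← hr w hw x hx] at hwx
    rw [← hr w hw y hy] at hwy
    exact (hr w hw z hz).1 (hzw w hw hwx hwy)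
  · rintro ⟨hz', hzw⟩
    obtain ⟨z, hz, rfl⟩ := hf.surjOn hz'
    refine ⟨z, ⟨hz, fun w hw hwx hwy => ?_⟩, rfl⟩
    rw [hr w hw x hx] at hwx
    rw [hr w hw y hy] at hwy
    exact (hr w hw z hz).2 (hzw (f w) (hf.mapsTo hw) hwx hwy)

theorem Set.InvOn.rel_iff {g : α → α} (h : InvOn g f s s) (hg : MapsTo g s s)
    (hr : ∀ a ∈ s, ∀ b ∈ s, r a b ↔ r (f a) (f b)) :
    ∀ a ∈ s, ∀ b ∈ s, r a b ↔ r (g a) (g b) := fun a ha b hb => by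
  rw [hr (g a) (hg ha) (g b) (hg hb), h.2 ha, h.2 hb]

theorem Set.BijOn.exists_mem_and_mem_iff {P : Set α → Prop} (hf : BijOn f s s)
    (hPs : ∀ S, P S → S ⊆ s) (hP : ∀ S ⊆ s, P S ↔ P (f '' S)) {x y : α} (hx : x ∈ s)
    (hy : y ∈ s) : (∃ S, P S ∧ x ∈ S ∧ y ∈ S) ↔ ∃ S, P S ∧ f x ∈ S ∧ f y ∈ S := by
  constructor
  · rintro ⟨S, hS, hxS, hyS⟩
    exact ⟨f '' S, (hP S (hPs S hS)).1 hS, mem_image_of_mem f hxS, mem_image_of_mem f hyS⟩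
  · rintro ⟨S', hS', hxS', hyS'⟩
    have himage : f '' (s ∩ f ⁻¹' S') = S' := by
      rw [image_inter_preimage, hf.image_eq, inter_eq_right.2 (hPs S' hS')]
    refine ⟨s ∩ f ⁻¹' S', ?_, ⟨hx, hxS'⟩, ⟨hy, hyS'⟩⟩
    rw [hP _ inter_subset_left, himage]
    exact hS'

end BijOn

open Relation

section Separation

variable {X Y Z : Submodule K V}

theorem le_sup_of_forall_adjacent (hV : 2 < Module.rank K V) (hX : X ∈ Grass K V)
    (hXY : Adjacent X Y) (hZ : X ⊓ Y ⋖ Z)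
    (h : ∀ W ∈ Grass K V, Adjacent W X → Adjacent W Y → ReflGen Adjacent W Z) : Z ≤ X ⊔ Y := by
  by_contra hZN
  obtain ⟨W, hWN, hMW⟩ := exists_covBy_not_le_of_ne_bot (hXY.inf_ne_bot hV hX) inf_le_sup
  have hWX : Adjacent W X := adjacent_of_top hWN hXY.covBy_sup_left fun h => hMW (h ▸ inf_le_left)
  have hWY : Adjacent W Y := adjacent_of_top hWN hXY.covBy_sup_right fun h => hMW (h ▸ inf_le_right)
  rcases h W (hWX.symm.mem_grass hX) hWX hWY with _ | hWZ
  · exact hZN hWN.le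
  -- `W ⊓ Z = W ⊓ (X ⊓ Y) < X ⊓ Y < Z`, so `Z` does not cover `W ⊓ Z`
  have hNZ : (X ⊔ Y) ⊓ Z = X ⊓ Y :=
    (hZ.eq_or_eq (le_inf inf_le_sup hZ.le) inf_le_right).resolve_right fun h' =>
      hZN (h' ▸ inf_le_left)
  have hWZ_eq : W ⊓ Z = W ⊓ (X ⊓ Y) := by
    rw [← hNZ, ← inf_assoc, inf_eq_left.2 hWN.le]
  exact hWZ.inf_covBy_right.2 (hWZ_eq ▸ inf_lt_right.2 hMW) hZ.lt

theorem inf_le_of_forall_adjacent (hV : 2 < Module.rank K V) (hX : X ∈ Grass K V)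
    (hXY : Adjacent X Y) (hZ : Z ⋖ X ⊔ Y)
    (h : ∀ W ∈ Grass K V, Adjacent W X → Adjacent W Y → ReflGen Adjacent W Z) : X ⊓ Y ≤ Z := by
  by_contra hMZ
  obtain ⟨W, hMW, hWN⟩ := exists_covBy_not_le_of_ne_top (hXY.sup_ne_top hV hX) inf_le_sup
  have hWX : Adjacent W X := adjacent_of_star hMW hXY.inf_covBy_left fun h => hWN (h ▸ le_sup_left)
  have hWY : Adjacent W Y :=
    adjacent_of_star hMW hXY.inf_covBy_right fun h => hWN (h ▸ le_sup_right)
  rcases h W (hWX.symm.mem_grass hX) hWX hWY with _ | hWZ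
  · exact hMZ hMW.le
  have hMZ_sup : X ⊓ Y ⊔ Z = X ⊔ Y :=
    (hZ.eq_or_eq le_sup_right (sup_le inf_le_sup hZ.le)).resolve_left fun h' =>
      hMZ (h' ▸ le_sup_left)
  have hWZ_eq : W ⊔ Z = W ⊔ (X ⊔ Y) := by
    rw [← hMZ_sup, ← sup_assoc, sup_eq_left.2 hMW.le]
  exact (covBy_sup_of_inf_covBy_left hWZ.inf_covBy_left).2 hZ.lt (hWZ_eq ▸ right_lt_sup.2 hWN)

end Separation

section Line

variable {X Y : Submodule K V}

theorem pencilSet_subset_perpPerp (hXY : Adjacent X Y) :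
    pencilSet (X ⊓ Y) (X ⊔ Y) ⊆ perpPerp (ReflGen Adjacent) (Grass K V) X Y := by
  intro Z hZ
  obtain ⟨hMZ, hZN⟩ := hXY.covBy_of_mem_pencilSet hZ
  refine ⟨hZ.1, fun W _ hWX hWY => ?_⟩
  rcases eq_or_ne W Z with rfl | hWZ
  · exact .refl
  have hW : X ⊓ Y ⋖ W ∨ W ⋖ X ⊔ Y := by
    rcases hWX with _ | hWX
    · exact .inl hXY.inf_covBy_left
    rcases hWY with _ | hWY
    · exact .inl hXY.inf_covBy_right
    exact inf_covBy_or_covBy_sup_of_adjacent hXY hWX hWY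
  rcases hW with hW | hW
  exacts [.single (adjacent_of_star hW hMZ hWZ), .single (adjacent_of_top hW hZN hWZ)]

theorem perpPerp_subset_pencilSet (hV : 2 < Module.rank K V) (hX : X ∈ Grass K V)
    (hY : Y ∈ Grass K V) (hXY : Adjacent X Y) :
    perpPerp (ReflGen Adjacent) (Grass K V) X Y ⊆ pencilSet (X ⊓ Y) (X ⊔ Y) := by
  rintro Z ⟨hZ, h⟩
  have h' : ∀ W ∈ Grass K V, Adjacent W X → Adjacent W Y → ReflGen Adjacent W Z :=
    fun W hW hWX hWY => h W hW (.single hWX) (.single hWY)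
  rcases h X hX .refl (.single hXY) with _ | hXZ
  · exact hXY.mem_pencilSet_left hX
  rcases h Y hY (.single hXY.symm) .refl with _ | hYZ
  · exact hXY.mem_pencilSet_right hY
  have hMN : ¬ X ⊓ Y ⋖ X ⊔ Y := fun h => h.2 hXY.inf_covBy_left.lt hXY.covBy_sup_left.lt
  rcases inf_covBy_or_covBy_sup_of_adjacent hXY hXZ.symm hYZ.symm with hMZ | hZN
  · refine ⟨hZ, hMZ.lt, (le_sup_of_forall_adjacent hV hX hXY hMZ h').lt_of_ne ?_⟩
    rintro rfl
    exact hMN hMZ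
  · refine ⟨hZ, (inf_le_of_forall_adjacent hV hX hXY hZN h').lt_of_ne ?_, hZN.lt⟩
    rintro rfl
    exact hMN hZN

theorem pencilSet_eq_perpPerp (hV : 2 < Module.rank K V) (hX : X ∈ Grass K V)
    (hY : Y ∈ Grass K V) (hXY : Adjacent X Y) :
    pencilSet (X ⊓ Y) (X ⊔ Y) = perpPerp (ReflGen Adjacent) (Grass K V) X Y :=
  (pencilSet_subset_perpPerp hXY).antisymm (perpPerp_subset_pencilSet hV hX hY hXY)

end Line

theorem IsPencil.image (hV : 2 < Module.rank K V) {f : Submodule K V → Submodule K V}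
    (hf : Set.BijOn f (Grass K V) (Grass K V))
    (hA : ∀ X ∈ Grass K V, ∀ Y ∈ Grass K V, (Adjacent X Y ↔ Adjacent (f X) (f Y)))
    {S : Set (Submodule K V)} (hS : IsPencil S) : IsPencil (f '' S) := by
  obtain ⟨X, hX, Y, hY, hXY, rfl⟩ := isPencil_iff.1 hS
  have hfXY := (hA X hX Y hY).1 hXY
  have hr : ∀ A ∈ Grass K V, ∀ B ∈ Grass K V,
      ReflGen Adjacent A B ↔ ReflGen Adjacent (f A) (f B) := fun A hA' B hB => by
    rw [reflGen_iff, reflGen_iff, hf.injOn.eq_iff hB hA', hA A hA' B hB]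
  rw [pencilSet_eq_perpPerp hV hX hY hXY, image_perpPerp hf hr hX hY,
    ← pencilSet_eq_perpPerp hV (hf.mapsTo hX) (hf.mapsTo hY) hfXY]
  exact isPencil_iff.2 ⟨_, hf.mapsTo hX, _, hf.mapsTo hY, hfXY, rfl⟩

theorem grassmannGraph_auto_iff_collineation_general (hV : 2 < Module.rank K V)
    (f : Submodule K V → Submodule K V)
    (hf : Set.BijOn f (Grass K V) (Grass K V)) :
    (∀ X ∈ Grass K V, ∀ Y ∈ Grass K V, (Adjacent X Y ↔ Adjacent (f X) (f Y))) ↔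
    (∀ S : Set (Submodule K V), S ⊆ Grass K V → (IsPencil S ↔ IsPencil (f '' S))) := by
  constructor
  · intro hA S hS
    have hinv := hf.invOn_invFunOn
    have hg := hf.symm hinv.symm
    refine ⟨IsPencil.image hV hf hA, fun h => ?_⟩
    rw [← hinv.1.image_image' hS]
    exact IsPencil.image hV hg (hinv.rel_iff hg.mapsTo hA) h
  · intro hP X hX Y hY
    rw [adjacent_iff_exists_pencil hX hY, adjacent_iff_exists_pencil (hf.mapsTo hX) (hf.mapsTo hY),
      hf.injOn.ne_iff hX hY, hf.exists_mem_and_mem_iff (fun S hS => hS.subset_grass) hP hX hY]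

/-- Corollary 5.1. A bijection of `𝒢` is an automorphism of the
Grassmann graph `(𝒢, ∼)` iff it is a collineation of the Grassmann space
`(𝒢, 𝔓)`, i.e. it and its inverse map pencils onto pencils. -/
theorem grassmannGraph_auto_iff_collineation (hV : 2 < Module.rank K V)
    (hG : (Grass K V).Nonempty)
    (f : Submodule K V → Submodule K V)
    (hf : Set.BijOn f (Grass K V) (Grass K V)) :
    (∀ X ∈ Grass K V, ∀ Y ∈ Grass K V, (Adjacent X Y ↔ Adjacent (f X) (f Y))) ↔
    (∀ S : Set (Submodule K V), S ⊆ Grass K V → (IsPencil S ↔ IsPencil (f '' S))) :=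
  grassmannGraph_auto_iff_collineation_general hV f hf
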